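/- Let C be a connected graph in which every block is a clique or an odd cycle (a Gallai tree), and let L be a list assignment with |L(v)| = deg_C(v) for every vertex v. If some terminal block B of C contains two vertices u, w with deg_C(u) = deg_C(w) and L(u) ≠ L(w), then C has a proper L-coloring. -/

import Mathlib

/-- `v` is a cut vertex of a connected graph `G`: deleting `v` disconnects the graph. -/
def IsCutVertex {V : Type*} (G : SimpleGraph V) (v : V) : Prop :=
  G.Connected ∧ ¬ (G.induce {w : V | w ≠ v}).Connected

/-- A set `S` induces a block of `G`. -/
def IsBlock {V : Type*} (G : SimpleGraph V) (S : Set V) : Prop :=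
  (G.induce S).Connected ∧ (∀ v : S, ¬ IsCutVertex (G.induce S) v) ∧
    ∀ T : Set V, S ⊂ T → (G.induce T).Connected → ∃ v : T, IsCutVertex (G.induce T) v

/-- A terminal block is a block containing at most one cut vertex of `G`. -/
def IsTerminalBlock {V : Type*} (G : SimpleGraph V) (S : Set V) : Prop :=
  IsBlock G S ∧ (S ∩ {v : V | IsCutVertex G v}).Subsingleton

/-!
Suppose every edge `pq` with `p` not a cut vertex had `L p ⊆ L q`. Then `L` would be constant
on the vertices of the terminal block `B` other than its cut vertex, and contained in the list of
that cut vertex. One of `u`, `w` is not a cut vertex, so `|L u| = |L w|` would force `L u = L w`.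
Hence some non-cut vertex `p` has a colour `c ∈ L p \ L q` for a neighbour `q`. Colour `p` by `c`
and delete `c` from the lists of its neighbours: `C - p` is connected, every vertex keeps at
least as many colours as its degree in `C - p`, and `q` keeps one more, so colouring greedily
towards `q` succeeds.
-/

open Finset

namespace SimpleGraph

variable {V α : Type*} {G : SimpleGraph V}

variable (G) in
def IsListColoringOn (L : V → Finset α) (s : Set V) (φ : V → α) : Prop :=
  (∀ v ∈ s, φ v ∈ L v) ∧ ∀ x ∈ s, ∀ y ∈ s, G.Adj x y → φ x ≠ φ y

theorem IsListColoringOn.update [DecidableEq V] {L : V → Finset α} {s : Set V} {φ : V → α}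
    (hφ : G.IsListColoringOn L s φ) {v : V} {c : α} (hc : c ∈ L v)
    (hfree : ∀ y ∈ s, G.Adj v y → φ y ≠ c) :
    G.IsListColoringOn L (insert v s) (Function.update φ v c) := by
  refine ⟨fun x hx => ?_, fun x hx y hy hxy => ?_⟩
  · by_cases hxv : x = v
    · subst hxv
      simpa using hc
    · simpa [hxv] using hφ.1 x (hx.resolve_left hxv)
  · by_cases hxv : x = v <;> by_cases hyv : y = v
    · exact absurd (hxv ▸ hyv ▸ hxy) G.irrefl
    · subst hxv
      simpa [hyv] using (hfree y (hy.resolve_left hyv) hxy).symm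
    · subst hyv
      simpa [hxv] using hfree x (hx.resolve_left hxv) hxy.symm
    · simpa [hxv, hyv] using hφ.2 x (hx.resolve_left hxv) y (hy.resolve_left hyv) hxy

theorem Preconnected.eq_of_le_of_adj {β : Type*} [PartialOrder β] (hG : G.Preconnected)
    {f : V → β} (hf : ∀ x y, G.Adj x y → f x ≤ f y) (x y : V) : f x = f y := by
  obtain ⟨p⟩ := hG x y
  induction p with
  | nil => rfl
  | cons h _ ih => exact (le_antisymm (hf _ _ h) (hf _ _ h.symm)).trans ih

variable [DecidableRel G.Adj] [DecidableEq V] [DecidableEq α]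

theorem exists_isListColoringOn_of_forall_exists_lt [Inhabited α] (L : V → Finset α)
    (s : Finset V) (h : ∀ t ⊆ s, t.Nonempty → ∃ v ∈ t, #{z ∈ t | G.Adj v z} < #(L v)) :
    ∃ φ, G.IsListColoringOn L s φ := by
  induction s using Finset.strongInduction with
  | H s ih =>
    rcases s.eq_empty_or_nonempty with rfl | hne
    · exact ⟨default, by simp [IsListColoringOn]⟩
    obtain ⟨v, hv, hlt⟩ := h s subset_rfl hne
    obtain ⟨φ, hφ⟩ :=
      ih (s.erase v) (erase_ssubset hv) fun t ht => h t (ht.trans (erase_subset v s))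
    obtain ⟨c, hc, hcφ⟩ := exists_mem_notMem_of_card_lt_card (card_image_le.trans_lt hlt)
    have hfree : ∀ y ∈ (s.erase v : Set V), G.Adj v y → φ y ≠ c := fun y hy hvy hcy =>
      hcφ (mem_image.mpr ⟨y, mem_filter.mpr ⟨mem_of_mem_erase hy, hvy⟩, hcy⟩)
    have := hφ.update hc hfree
    rw [← coe_insert, insert_erase hv] at this
    exact ⟨_, this⟩

theorem exists_isListColoringOn_of_preconnected [Inhabited α] (L : V → Finset α) {s : Finset V}
    (hs : (G.induce (s : Set V)).Preconnected) {r : V} (hr : r ∈ s)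
    (hL : ∀ v ∈ s, #{z ∈ s | G.Adj v z} ≤ #(L v)) (hLr : #{z ∈ s | G.Adj r z} < #(L r)) :
    ∃ φ, G.IsListColoringOn L s φ := by
  refine exists_isListColoringOn_of_forall_exists_lt L s fun t hts ⟨v₀, hv₀⟩ => ?_
  by_cases hrt : r ∈ t
  · exact ⟨r, hrt, (card_le_card (filter_subset_filter _ hts)).trans_lt hLr⟩
  obtain ⟨p⟩ := hs ⟨v₀, hts hv₀⟩ ⟨r, hr⟩
  obtain ⟨d, -, hd₁, hd₂⟩ := p.exists_boundary_dart {x | (x : V) ∈ t} hv₀ hrt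
  refine ⟨d.fst, hd₁, (card_lt_card ?_).trans_le (hL _ d.fst.2)⟩
  refine (ssubset_iff_of_subset (filter_subset_filter _ hts)).mpr ⟨d.snd, ?_, ?_⟩
  · exact mem_filter.mpr ⟨d.snd.2, d.adj⟩
  · exact fun h => hd₂ (mem_filter.mp h).1

variable [Fintype V]

theorem card_filter_adj_erase_add (v p : V) :
    #{z ∈ univ.erase p | G.Adj v z} + (if G.Adj v p then 1 else 0) = G.degree v := by
  rw [filter_erase, ← neighborFinset_eq_filter, card_erase_eq_ite, card_neighborFinset_eq_degree]
  by_cases h : G.Adj v p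
  · simp [h, Nat.sub_add_cancel (G.degree_pos_iff_exists_adj v |>.mpr ⟨p, h⟩)]
  · simp [h]

theorem exists_listColoring_of_adj_of_mem_of_notMem (L : V → Finset α)
    (hL : ∀ v, G.degree v ≤ #(L v)) {p q : V} (hpq : G.Adj p q)
    (hp : (G.induce {z | z ≠ p}).Preconnected) {c : α} (hcp : c ∈ L p) (hcq : c ∉ L q) :
    ∃ φ : V → α, (∀ v, φ v ∈ L v) ∧ ∀ x y, G.Adj x y → φ x ≠ φ y := by
  let L' v := if G.Adj p v then (L v).erase c else L v
  have hs : (G.induce ((univ.erase p : Finset V) : Set V)).Preconnected := by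
    have : ((univ.erase p : Finset V) : Set V) = {z | z ≠ p} := by ext; simp
    rwa [this]
  have hL' : ∀ v ∈ univ.erase p, #{z ∈ univ.erase p | G.Adj v z} ≤ #(L' v) := by
    intro v _
    have hdeg := card_filter_adj_erase_add (G := G) v p
    have := hL v
    by_cases hpv : G.Adj p v
    · have := pred_card_le_card_erase (s := L v) (a := c)
      simp only [L', hpv, hpv.symm, if_true] at *
      omega
    · simp only [L', hpv, if_false] at *
      omega
  have hL'q : #{z ∈ univ.erase p | G.Adj q z} < #(L' q) := by
    have hdeg := card_filter_adj_erase_add (G := G) q p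
    simp only [L', hpq, hpq.symm, if_true, erase_eq_of_notMem hcq] at *
    have := hL q
    omega
  have : Inhabited α := ⟨c⟩
  obtain ⟨φ, hφL', hφ⟩ := exists_isListColoringOn_of_preconnected L' hs
    (mem_erase.mpr ⟨hpq.ne', mem_univ q⟩) hL' hL'q
  have hφL : ∀ v ∈ ((univ.erase p : Finset V) : Set V), φ v ∈ L v := fun v hv => by
    have := hφL' v hv
    simp only [L'] at this
    split_ifs at this
    exacts [mem_of_mem_erase this, this]
  have hfree : ∀ y ∈ ((univ.erase p : Finset V) : Set V), G.Adj p y → φ y ≠ c := fun y hy hpy =>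
    (mem_erase.mp (by simpa only [L', hpy, if_true] using hφL' y hy)).1
  have hcol := IsListColoringOn.update ⟨hφL, hφ⟩ hcp hfree
  rw [← coe_insert, insert_erase (mem_univ p), coe_univ] at hcol
  exact ⟨_, fun v => hcol.1 v trivial, fun x y => hcol.2 x trivial y trivial⟩

end SimpleGraph

theorem connected_induce_ne_of_not_isCutVertex {V : Type*} {G : SimpleGraph V}
    (hG : G.Connected) {v : V} (hv : ¬IsCutVertex G v) : (G.induce {w | w ≠ v}).Connected :=
  not_not.mp fun h => hv ⟨hG, h⟩

section Block

variable {V β : Type*} [PartialOrder β] {C : SimpleGraph V} {B : Set V} {f : V → β}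

theorem IsBlock.eq_of_not_isCutVertex (hB : IsBlock C B)
    (hcut : (B ∩ {v | IsCutVertex C v}).Subsingleton)
    (hf : ∀ p q, C.Adj p q → ¬IsCutVertex C p → f p ≤ f q) {y y' : V} (hy : y ∈ B)
    (hy' : y' ∈ B) (hyc : ¬IsCutVertex C y) (hyc' : ¬IsCutVertex C y') : f y = f y' := by
  by_cases hx : ∃ x ∈ B, IsCutVertex C x
  · obtain ⟨x, hxB, hxc⟩ := hx
    have hne : ∀ (z : B), ¬IsCutVertex C z → z ≠ ⟨x, hxB⟩ := fun z hzc hzx =>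
      hzc (congrArg Subtype.val hzx ▸ hxc)
    refine (connected_induce_ne_of_not_isCutVertex hB.1 (hB.2.1 ⟨x, hxB⟩)).preconnected
      |>.eq_of_le_of_adj (f := fun t => f t.1.1) (fun s _ hst => hf _ _ hst fun hsc => ?_)
      ⟨⟨y, hy⟩, hne _ hyc⟩ ⟨⟨y', hy'⟩, hne _ hyc'⟩
    exact s.2 (Subtype.ext (hcut ⟨s.1.2, hsc⟩ ⟨hxB, hxc⟩))
  · push Not at hx
    exact hB.1.preconnected.eq_of_le_of_adj (f := fun t : B => f t)
      (fun s _ hst => hf _ _ hst (hx s s.2)) ⟨y, hy⟩ ⟨y', hy'⟩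

theorem IsTerminalBlock.le_of_not_isCutVertex (hB : IsTerminalBlock C B)
    (hf : ∀ p q, C.Adj p q → ¬IsCutVertex C p → f p ≤ f q) {y y' : V} (hy : y ∈ B)
    (hy' : y' ∈ B) (hyc : ¬IsCutVertex C y) : f y ≤ f y' := by
  by_cases hyc' : IsCutVertex C y'
  · have : Nontrivial B :=
      nontrivial_of_ne (⟨y, hy⟩ : B) ⟨y', hy'⟩ fun h => hyc (by rwa [Subtype.mk.inj h])
    obtain ⟨p, hp⟩ := hB.1.1.preconnected.exists_adj_of_nontrivial ⟨y', hy'⟩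
    have hpc : ¬IsCutVertex C p := fun h =>
      hp.ne (Subtype.ext (hB.2 ⟨hy', hyc'⟩ ⟨p.2, h⟩))
    calc f y = f p := hB.1.eq_of_not_isCutVertex hB.2 hf hy p.2 hyc hpc
      _ ≤ f y' := hf _ _ hp.symm hpc
  · exact (hB.1.eq_of_not_isCutVertex hB.2 hf hy hy' hyc hyc').le

theorem IsTerminalBlock.exists_adj_not_isCutVertex_not_subset {α : Type*} {L : V → Finset α}
    (hB : IsTerminalBlock C B) {u w : V} (hu : u ∈ B) (hw : w ∈ B) (hcard : #(L u) = #(L w))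
    (hLuw : L u ≠ L w) : ∃ p q, C.Adj p q ∧ ¬IsCutVertex C p ∧ ¬L p ⊆ L q := by
  by_contra! h
  wlog huc : ¬IsCutVertex C u generalizing u w
  · refine this hw hu hcard.symm hLuw.symm fun hwc => hLuw ?_
    exact congrArg L (hB.2 ⟨hu, not_not.mp huc⟩ ⟨hw, hwc⟩)
  exact hLuw (eq_of_subset_of_card_le (hB.le_of_not_isCutVertex h hu hw huc) hcard.ge)

end Block

theorem stmt18_general {V : Type*} [Fintype V] [DecidableEq V] (C : SimpleGraph V)
    [DecidableRel C.Adj] (hconn : C.Connected)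
    (L : V → Finset ℕ) (hL : ∀ v, (L v).card = C.degree v)
    (B : Set V) (hB : IsTerminalBlock C B)
    (u w : V) (hu : u ∈ B) (hw : w ∈ B)
    (hdeg : C.degree u = C.degree w) (hLuw : L u ≠ L w) :
    ∃ φ : V → ℕ, (∀ v, φ v ∈ L v) ∧ ∀ a b, C.Adj a b → φ a ≠ φ b := by
  obtain ⟨p, q, hpq, hp, hLpq⟩ :=
    hB.exists_adj_not_isCutVertex_not_subset hu hw (by rw [hL, hL, hdeg]) hLuw
  obtain ⟨c, hcp, hcq⟩ := not_subset.mp hLpq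
  exact C.exists_listColoring_of_adj_of_mem_of_notMem L (fun v => (hL v).ge) hpq
    (connected_induce_ne_of_not_isCutVertex hconn hp).preconnected hcp hcq

/-- Let `C` be a Gallai tree (a connected graph in which every block is a clique or an odd
cycle) and let `L` satisfy `|L(v)| = deg(v)` for every vertex. If some terminal block `B`
contains vertices `u ≠ w` with `deg(u) = deg(w)` and `L(u) ≠ L(w)`, then `C` has a proper
`L`-coloring. -/
theorem stmt18 {V : Type*} [Fintype V] [DecidableEq V] (C : SimpleGraph V)
    [DecidableRel C.Adj] (hconn : C.Connected)
    (hGallai : ∀ S : Set V, IsBlock C S →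
      (∀ u ∈ S, ∀ w ∈ S, u ≠ w → C.Adj u w) ∨
      (∃ m : ℕ, 3 ≤ m ∧ Odd m ∧
        Nonempty (C.induce S ≃g SimpleGraph.cycleGraph m)))
    (L : V → Finset ℕ) (hL : ∀ v, (L v).card = C.degree v)
    (B : Set V) (hB : IsTerminalBlock C B)
    (u w : V) (hu : u ∈ B) (hw : w ∈ B) (huw : u ≠ w)
    (hdeg : C.degree u = C.degree w) (hLuw : L u ≠ L w) :
    ∃ φ : V → ℕ, (∀ v, φ v ∈ L v) ∧ ∀ a b, C.Adj a b → φ a ≠ φ b :=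
  stmt18_general C hconn L hL B hB u w hu hw hdeg hLuw
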